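/- Let μ_Z − ν > μ_W > 0. Let (Y(t)) be a Yule process with rate μ_W started from w ≥ 1, let (Z(t)) be an independent birth-and-death process with rates q(z,z+1) = μ_Z(z∨1), q(z,z−1) = νz started from z ≥ 0, with birth instants (σ_n), and let (W(t)) be the process obtained from Y by killing one individual together with its progeny at each σ_n. Then H₀ = inf{t ≥ 0 : W(t) = 0} is almost surely finite. -/

import Mathlib

open MeasureTheory ProbabilityTheory Real Filter Set

noncomputable section

namespace FileSharing

variable {Ω : Type*} [MeasurableSpace Ω] {S : Type*}

/-- The exponential distribution with rate `r`, as a measure on `ℝ`. -/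
def expMeasure (r : ℝ) : Measure ℝ :=
  (volume : Measure ℝ).withDensity (exponentialPDF r)

/-- The uniform distribution on `(0, 1]`. -/
def unifMeasure : Measure ℝ := (volume : Measure ℝ).restrict (Set.Ioc (0 : ℝ) 1)

/-- Embedded jump chain of a continuous-time Markov jump process:
`next s u` is the state after a jump from `s`, where `u ∈ (0,1]` selects the target. -/
def chainOf (next : S → ℝ → S) (x : S) (U : ℕ → Ω → ℝ) : ℕ → Ω → S
  | 0 => fun _ => x
  | n + 1 => fun ω => next (chainOf next x U n ω) (U n ω)

/-- Jump times: the `n`-th jump occurs after an exponential holding time with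
rate `R s` in state `s` (holding time = standard exponential `E n` divided by the rate). -/
def jumpT (R : S → ℝ) (next : S → ℝ → S) (x : S) (E U : ℕ → Ω → ℝ) : ℕ → Ω → ℝ
  | 0 => fun _ => 0
  | n + 1 => fun ω => jumpT R next x E U n ω + E n ω / R (chainOf next x U n ω)

/-- The continuous-time Markov jump process with jump rates `R`, jump transitions `next`,
initial state `x`, driven by i.i.d. standard exponentials `E` (holding times) and
i.i.d. uniform variables `U` (jump selection). -/
def jumpProc (R : S → ℝ) (next : S → ℝ → S) (x : S) (E U : ℕ → Ω → ℝ)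
    (t : ℝ) (ω : Ω) : S :=
  chainOf next x U (Nat.card {n : ℕ | jumpT R next x E U (n + 1) ω ≤ t}) ω

/-- `E` is an i.i.d. sequence of standard exponential random variables. -/
def IIDExp (P : Measure Ω) (E : ℕ → Ω → ℝ) : Prop :=
  (∀ n, Measurable (E n)) ∧ iIndepFun E P ∧
    ∀ n, Measure.map (E n) P = expMeasure 1

/-- `E`, `U` are jointly independent, the `E n` standard exponential and
the `U n` uniform on `(0,1]`. -/
def DrivingNoise (P : Measure Ω) (E U : ℕ → Ω → ℝ) : Prop :=
  (∀ n, Measurable (E n)) ∧ (∀ n, Measurable (U n)) ∧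
    iIndepFun (Sum.elim E U) P ∧
    (∀ n, Measure.map (E n) P = expMeasure 1) ∧
    (∀ n, Measure.map (U n) P = unifMeasure)

/-- A Yule (pure birth) process with rate `μ`, started from `w` individuals:
each individual gives birth to a new one at rate `μ`, so the total birth rate
in state `s` is `μ * s`. -/
def yule (μ : ℝ) (w : ℕ) (E : ℕ → Ω → ℝ) : ℝ → Ω → ℕ :=
  jumpProc (fun s => μ * s) (fun s _ => s + 1) w E (fun _ _ => 0)

/-- Total jump rate of the birth-and-death process with birth rate `μ (z ∨ 1)`
and death rate `ν z`. -/
def bdR (μ ν : ℝ) (z : ℕ) : ℝ := μ * max z 1 + ν * z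

/-- Jump transition of the birth-and-death process with birth rate `μ (z ∨ 1)`
and death rate `ν z`. -/
def bdNext (μ ν : ℝ) (z : ℕ) (u : ℝ) : ℕ :=
  if u * bdR μ ν z ≤ μ * max z 1 then z + 1 else z - 1

/-- Embedded chain of the birth-and-death process. -/
def bdChain (μ ν : ℝ) (z : ℕ) (U : ℕ → Ω → ℝ) : ℕ → Ω → ℕ :=
  chainOf (bdNext μ ν) z U

/-- Jump times of the birth-and-death process. -/
def bdTimes (μ ν : ℝ) (z : ℕ) (E U : ℕ → Ω → ℝ) : ℕ → Ω → ℝ :=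
  jumpT (bdR μ ν) (bdNext μ ν) z E U

/-- The birth-and-death process with rates `q(z, z+1) = μ (z ∨ 1)` and `q(z, z-1) = ν z`. -/
def bdProc (μ ν : ℝ) (z : ℕ) (E U : ℕ → Ω → ℝ) : ℝ → Ω → ℕ :=
  jumpProc (bdR μ ν) (bdNext μ ν) z E U

/-- `bdUp μ ν z U n ω` : the `(n+1)`-st jump of the birth-and-death process is a birth. -/
def bdUp (μ ν : ℝ) (z : ℕ) (U : ℕ → Ω → ℝ) (n : ℕ) (ω : Ω) : Prop :=
  bdChain μ ν z U (n + 1) ω = bdChain μ ν z U n ω + 1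

/-- Counting process of the birth instants of the birth-and-death process. -/
def bdBirthCount (μ ν : ℝ) (z : ℕ) (E U : ℕ → Ω → ℝ) (t : ℝ) (ω : Ω) : ℕ :=
  Nat.card {n : ℕ | bdTimes μ ν z E U (n + 1) ω ≤ t ∧ bdUp μ ν z U n ω}

/-- The `k`-th birth instant (`k` counted from `0`) of the birth-and-death process. -/
def bdBirthTime (μ ν : ℝ) (z : ℕ) (E U : ℕ → Ω → ℝ) (k : ℕ) (ω : Ω) : ℝ :=
  bdTimes μ ν z E U (Nat.nth (fun n => bdUp μ ν z U n ω) k + 1) ω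


/-- The index of the killing that empties the killed population: the first `n` (as an
extended natural) such that `W(σ_n) = 0`, where `σ_n` may be random. -/
def killIdxR (W : ℝ → Ω → ℕ) (σ : ℕ → Ω → ℝ) (ω : Ω) : ℕ∞ :=
  sInf {e : ℕ∞ | ∃ n : ℕ, e = (n : ℕ∞) ∧ W (σ n ω) ω = 0}

open Classical in
/-- The interacting branching system of Section 3: `Y` is a Yule process with rate `μ_W`
started from `w` individuals, `Z` an independent birth-and-death process with rates
`q(z,z+1) = μ_Z(z∨1)`, `q(z,z−1) = νz` started from `z`, and `W` is obtained from `Y` by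
killing one individual together with its future progeny at each birth instant `σ_n` of
`Z` as long as the population is non-empty:
`W(t) = Y(t) − Σ_{i ≤ κ} X_i(t) 1_{σ_i ≤ t}`, where `κ` is the first `n` with
`W(σ_n) = 0` and the progeny `(X_i(σ_i + ·))` of the `i`-th killed individual is a Yule
process with rate `μ_W` started from one individual, driven by independent noise. -/
def KilledYuleRep (P : Measure Ω) (μW μZ ν : ℝ) (w z : ℕ)
    (W Z Y : ℝ → Ω → ℕ) : Prop :=
  ∃ (EY EZ UZ : ℕ → Ω → ℝ) (F : ℕ → ℕ → Ω → ℝ) (X : ℕ → ℝ → Ω → ℕ),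
    (∀ n, Measurable (EY n)) ∧ (∀ n, Measurable (EZ n)) ∧ (∀ n, Measurable (UZ n)) ∧
    (∀ i n, Measurable (F i n)) ∧
    iIndepFun
      (fun p : (ℕ ⊕ ℕ) ⊕ (ℕ ⊕ ℕ × ℕ) =>
        Sum.elim (Sum.elim EY EZ) (Sum.elim UZ fun q => F q.1 q.2) p) P ∧
    (∀ n, Measure.map (EY n) P = expMeasure 1) ∧
    (∀ n, Measure.map (EZ n) P = expMeasure 1) ∧
    (∀ n, Measure.map (UZ n) P = unifMeasure) ∧
    (∀ i n, Measure.map (F i n) P = expMeasure 1) ∧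
    Y = yule μW w EY ∧ Z = bdProc μZ ν z EZ UZ ∧
    (∀ i, ∀ t : ℝ, 0 ≤ t → ∀ ω,
      X i (bdBirthTime μZ ν z EZ UZ i ω + t) ω = yule μW 1 (F i) t ω) ∧
    (∀ t : ℝ, 0 ≤ t → ∀ ω, (W t ω : ℤ) =
      (Y t ω : ℤ) - ∑' i : ℕ,
        if bdBirthTime μZ ν z EZ UZ i ω ≤ t ∧
            (i : ℕ∞) ≤ killIdxR W (bdBirthTime μZ ν z EZ UZ) ω
          then (X i t ω : ℤ) else 0)

/-- Extinction time of the killed process. -/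
def hitZero (W : ℝ → Ω → ℕ) (ω : Ω) : ℝ := sInf {t : ℝ | 0 ≤ t ∧ W t ω = 0}

/-!
Fix a sample path on which the strong law of large numbers holds for the holding times of `Y`
and `Z` and for the birth/death choices of `Z`. If `W` never vanished, no killing would be
skipped, so at the `n`-th jump time `T n` of `Z` the nonnegativity of `W` leaves room in
`Y (T n)` for the killed subtrees, of at least one individual each, of the births among the
first `n` jumps of `Z`: a positive fraction of `n`. Summation by parts turns the law of large
numbers for the holding times into `∑_{k<n} E k / (k + 1) ~ log n`. With rates at least of
order `(μ_Z − ν) k` this gives `c' T n ≤ log n` for every `c' < μ_Z − ν`, and with the rates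
`μ_W (w + k)` it gives `Y t ≤ D e^{c t}` for every `c > μ_W`. Hence `Y (T n) ≤ D n^{c / c'}`,
which is sublinear when `μ_W < c < c' < μ_Z − ν`.
-/

open Finset Topology Asymptotics

lemma sum_range_div_succ_eq_by_parts (d : ℕ → ℝ) (n : ℕ) :
    ∑ k ∈ range n, d k / (k + 1) = (∑ k ∈ range n, d k) / (n + 1) +
      ∑ k ∈ range n, (∑ j ∈ range (k + 1), d j) / ((k + 1) * (k + 2)) := by
  induction n with
  | zero => simp
  | succ n ih =>
    simp only [sum_range_succ _ n, ih]
    push_cast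
    field_simp
    ring

lemma sum_range_one_div_succ (n : ℕ) : ∑ k ∈ range n, (1 : ℝ) / (k + 1) = harmonic n := by
  simp [harmonic]

lemma log_le_harmonic (n : ℕ) : Real.log n ≤ harmonic n := by
  simpa using log_le_harmonic_floor (n : ℝ) n.cast_nonneg

lemma tendsto_harmonic_div_log :
    Tendsto (fun n : ℕ => (harmonic n : ℝ) / Real.log n) atTop (𝓝 1) := by
  have hupper : Tendsto (fun n : ℕ => 1 / Real.log n + 1) atTop (𝓝 1) := by
    simpa using (tendsto_inv_atTop_zero.comp
      (Real.tendsto_log_atTop.comp tendsto_natCast_atTop_atTop)).add_const 1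
  refine tendsto_of_tendsto_of_tendsto_of_le_of_le' tendsto_const_nhds hupper ?_ ?_ <;>
    filter_upwards [eventually_gt_atTop 1] with n hn <;>
    have hlog : 0 < Real.log n := Real.log_pos (by exact_mod_cast hn)
  · rw [le_div_iff₀ hlog, one_mul]
    exact log_le_harmonic n
  · rw [div_le_iff₀ hlog, add_mul, one_div_mul_cancel hlog.ne', one_mul]
    exact harmonic_le_one_add_log n

lemma isLittleO_sum_div_succ_log {d : ℕ → ℝ}
    (hd : Tendsto (fun n : ℕ => (∑ k ∈ range n, d k) / n) atTop (𝓝 0)) :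
    (fun n : ℕ => ∑ k ∈ range n, d k / (k + 1)) =o[atTop] (fun n : ℕ => Real.log n) := by
  have hd' : Tendsto (fun n : ℕ => (∑ k ∈ range n, d k) / (n + 1)) atTop (𝓝 0) := by
    have := hd.mul (tendsto_natCast_div_add_atTop (1 : ℝ))
    rw [zero_mul] at this
    refine this.congr' ?_
    filter_upwards [eventually_ne_atTop 0] with n hn
    field_simp
  have hH : Tendsto (fun n : ℕ => ∑ k ∈ range n, (1 : ℝ) / (k + 1)) atTop atTop := by
    simp only [sum_range_one_div_succ]
    exact tendsto_atTop_mono log_le_harmonic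
      (Real.tendsto_log_atTop.comp tendsto_natCast_atTop_atTop)
  have hHlog : (fun n : ℕ => ∑ k ∈ range n, (1 : ℝ) / (k + 1)) =O[atTop]
      (fun n : ℕ => Real.log n) := by
    simp only [sum_range_one_div_succ]
    refine isBigO_of_div_tendsto_nhds ?_ 1 tendsto_harmonic_div_log
    filter_upwards [eventually_gt_atTop 1] with n hn hlog
    exact absurd hlog (Real.log_pos (by exact_mod_cast hn)).ne'
  have hfirst : (fun n : ℕ => (∑ k ∈ range n, d k) / (n + 1)) =o[atTop]
      (fun n : ℕ => Real.log n) :=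
    ((isLittleO_one_iff ℝ).mpr hd').trans
      (isLittleO_const_log_atTop.comp_tendsto tendsto_natCast_atTop_atTop)
  have hterm : (fun k : ℕ => (∑ j ∈ range (k + 1), d j) / ((k + 1) * (k + 2)))
      =o[atTop] (fun k : ℕ => (1 : ℝ) / (k + 1)) := by
    have h := ((isLittleO_one_iff ℝ).mpr (hd'.comp (tendsto_add_atTop_nat 1))).mul_isBigO
      (isBigO_refl (fun k : ℕ => (1 : ℝ) / (k + 1)) atTop)
    simp only [one_mul] at h
    refine h.congr_left (fun k => ?_)
    simp only [Function.comp, Nat.cast_add, Nat.cast_one]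
    field_simp
    ring
  have hsecond := (hterm.sum_range (fun k => by positivity) hH).trans_isBigO hHlog
  simpa only [sum_range_div_succ_eq_by_parts] using hfirst.add hsecond

lemma tendsto_sum_div_succ_div_log {a : ℕ → ℝ} {L : ℝ}
    (ha : Tendsto (fun n : ℕ => (∑ k ∈ range n, a k) / n) atTop (𝓝 L)) :
    Tendsto (fun n : ℕ => (∑ k ∈ range n, a k / (k + 1)) / Real.log n) atTop (𝓝 L) := by
  have hd : Tendsto (fun n : ℕ => (∑ k ∈ range n, (a k - L)) / n) atTop (𝓝 0) := by
    rw [← sub_self L]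
    refine (ha.sub_const L).congr' ?_
    filter_upwards [eventually_ne_atTop 0] with n hn
    simp only [sum_sub_distrib, sum_const, card_range, nsmul_eq_mul]
    field_simp
  have h := (tendsto_harmonic_div_log.const_mul L).add
    (isLittleO_sum_div_succ_log hd).tendsto_div_nhds_zero
  rw [mul_one, add_zero] at h
  refine h.congr (fun n => ?_)
  rw [← sum_range_one_div_succ, mul_div_assoc', ← add_div, mul_sum, ← sum_add_distrib]
  congr 1
  refine sum_congr rfl (fun k _ => ?_)
  ring

lemma exists_sum_range_le_add {f g : ℕ → ℝ} (h : ∀ᶠ k in atTop, f k ≤ g k) :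
    ∃ C, ∀ n, ∑ k ∈ range n, f k ≤ C + ∑ k ∈ range n, g k := by
  obtain ⟨K, hK⟩ := eventually_atTop.mp h
  refine ⟨∑ k ∈ range K, max (f k - g k) 0, fun n => ?_⟩
  rw [← sub_le_iff_le_add, ← sum_sub_distrib]
  calc ∑ k ∈ range n, (f k - g k) ≤ ∑ k ∈ range n, max (f k - g k) 0 :=
        sum_le_sum fun k _ => le_max_left _ _
    _ ≤ ∑ k ∈ range (max n K), max (f k - g k) 0 :=
        sum_le_sum_of_subset_of_nonneg (range_subset_range.mpr (le_max_left n K))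
          fun k _ _ => le_max_right _ _
    _ = ∑ k ∈ range K, max (f k - g k) 0 := by
        rw [← sum_range_add_sum_Ico _ (le_max_right n K), add_eq_left]
        exact sum_eq_zero fun k hk => max_eq_right (sub_nonpos.mpr (hK k (mem_Ico.mp hk).1))

lemma tendsto_const_add_mul_div_log {S : ℕ → ℝ} {L : ℝ}
    (hS : Tendsto (fun n : ℕ => S n / Real.log n) atTop (𝓝 L)) (a b : ℝ) :
    Tendsto (fun n : ℕ => (a + b * S n) / Real.log n) atTop (𝓝 (b * L)) := by
  have ha : Tendsto (fun n : ℕ => a / Real.log n) atTop (𝓝 0) :=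
    tendsto_const_nhds.div_atTop (Real.tendsto_log_atTop.comp tendsto_natCast_atTop_atTop)
  simpa [add_div, mul_div_assoc] using ha.add (hS.const_mul b)

lemma eventually_le_log_of_tendsto_div_log {f : ℕ → ℝ} {L : ℝ}
    (hf : Tendsto (fun n : ℕ => f n / Real.log n) atTop (𝓝 L)) (hL : L < 1) :
    ∀ᶠ n : ℕ in atTop, f n ≤ Real.log n := by
  filter_upwards [hf.eventually_lt_const hL, eventually_gt_atTop 1] with n hlt hn
  have hlog : 0 < Real.log n := Real.log_pos (by exact_mod_cast hn)
  exact ((div_lt_one hlog).mp hlt).le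

lemma eventually_log_le_of_tendsto_div_log {f : ℕ → ℝ} {L : ℝ}
    (hf : Tendsto (fun n : ℕ => f n / Real.log n) atTop (𝓝 L)) (hL : 1 < L) :
    ∀ᶠ n : ℕ in atTop, Real.log n ≤ f n := by
  filter_upwards [hf.eventually_const_lt hL, eventually_gt_atTop 1] with n hlt hn
  have hlog : 0 < Real.log n := Real.log_pos (by exact_mod_cast hn)
  exact ((one_lt_div hlog).mp hlt).le

/-- Under `hT`, `D e^{c T n} ≤ D n^{c / c'}`, which grows sublinearly. -/
lemma not_eventually_mul_le_mul_exp {T : ℕ → ℝ} {a c c' D : ℝ} (ha : 0 < a) (hc : 0 < c)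
    (hcc' : c < c') (hT : ∀ᶠ n : ℕ in atTop, c' * T n ≤ Real.log n) :
    ¬ ∀ᶠ n : ℕ in atTop, a * n ≤ D * Real.exp (c * T n) := fun hle => by
  obtain ⟨n, ⟨⟨hn, hTn⟩, hn0⟩, hlogn⟩ := (((hle.and hT).and (eventually_gt_atTop 0)).and <|
    (Real.tendsto_log_atTop.comp tendsto_natCast_atTop_atTop).eventually_gt_atTop
      (c' * (Real.log D - Real.log a) / (c' - c))).exists
  have hpos : 0 < a * n := by positivity
  have hD : 0 < D := pos_of_mul_pos_left (hpos.trans_le hn) (Real.exp_pos _).le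
  have hlog := Real.log_le_log hpos hn
  rw [Real.log_mul ha.ne' (by positivity), Real.log_mul hD.ne' (Real.exp_pos _).ne',
    Real.log_exp] at hlog
  rw [Function.comp_apply, div_lt_iff₀ (sub_pos.mpr hcc')] at hlogn
  nlinarith [mul_le_mul_of_nonneg_left hlog (hc.trans hcc').le,
    mul_le_mul_of_nonneg_left hTn hc.le]

section JumpProcess

variable {Ω S : Type*}
variable {R : S → ℝ} {next : S → ℝ → S} {x : S} {E U : ℕ → Ω → ℝ} {ω : Ω}

lemma jumpT_eq_sum (n : ℕ) :
    jumpT R next x E U n ω = ∑ k ∈ range n, E k ω / R (chainOf next x U k ω) := by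
  induction n with
  | zero => rfl
  | succ n ih => rw [sum_range_succ, ← ih]; rfl

lemma jumpT_mono (hE : ∀ k, 0 ≤ E k ω) (hR : ∀ k, 0 < R (chainOf next x U k ω)) :
    Monotone fun n => jumpT R next x E U n ω :=
  monotone_nat_of_le_succ fun n =>
    le_add_of_nonneg_right (div_nonneg (hE n) (hR n).le)

lemma card_jumpT_succ_le {N : ℕ} {c : ℝ} (hc : 0 ≤ c)
    (hN : ∀ n ≥ N, Real.log n ≤ c * jumpT R next x E U n ω) (t : ℝ) :
    Nat.card {n : ℕ | jumpT R next x E U (n + 1) ω ≤ t} ≤ N + ⌊Real.exp (c * t)⌋₊ := by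
  refine (Nat.card_mono (Set.finite_Iio (N + ⌊Real.exp (c * t)⌋₊)) fun n hn => ?_).trans
    (by simp)
  rw [Set.mem_Iio]
  by_contra! hbig
  have hlog : Real.log (n + 1 : ℕ) ≤ c * t :=
    (hN (n + 1) (by omega)).trans (mul_le_mul_of_nonneg_left hn hc)
  have := Nat.le_floor ((Real.log_le_iff_le_exp (by positivity)).mp hlog)
  omega

variable (hE0 : ∀ k, 0 ≤ E k ω)
  (hE : Tendsto (fun n : ℕ => (∑ k ∈ range n, E k ω) / n) atTop (𝓝 1))
include hE0 hE

lemma eventually_mul_jumpT_le_log {ρ c : ℝ} (hc : 0 ≤ c) (hcρ : c < ρ)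
    (hR : ∀ᶠ k : ℕ in atTop, ρ * (k + 1) ≤ R (chainOf next x U k ω)) :
    ∀ᶠ n : ℕ in atTop, c * jumpT R next x E U n ω ≤ Real.log n := by
  have hρ : 0 < ρ := hc.trans_lt hcρ
  obtain ⟨C, hC⟩ := exists_sum_range_le_add (f := fun k => E k ω / R (chainOf next x U k ω))
    (g := fun k => ρ⁻¹ * (E k ω / (k + 1))) <| by
    filter_upwards [hR] with k hk
    rw [inv_mul_eq_div, div_div, mul_comm]
    exact div_le_div_of_nonneg_left (hE0 k) (by positivity) hk
  refine (eventually_le_log_of_tendsto_div_log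
    (tendsto_const_add_mul_div_log (tendsto_sum_div_succ_div_log hE) (c * C) (c * ρ⁻¹))
    (by rw [mul_one, ← div_eq_mul_inv, div_lt_one hρ]; exact hcρ)).mono fun n hn => ?_
  have h := mul_le_mul_of_nonneg_left (hC n) hc
  rw [← mul_sum, mul_add] at h
  rw [jumpT_eq_sum]
  linarith

lemma eventually_log_le_mul_jumpT {ρ c : ℝ} (hρc : ρ < c)
    (hR : ∀ᶠ k : ℕ in atTop,
      0 < R (chainOf next x U k ω) ∧ R (chainOf next x U k ω) ≤ ρ * (k + 1)) :
    ∀ᶠ n : ℕ in atTop, Real.log n ≤ c * jumpT R next x E U n ω := by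
  have hρ : 0 < ρ := by
    obtain ⟨k, hk₀, hk⟩ := hR.exists
    exact pos_of_mul_pos_left (hk₀.trans_le hk) (by positivity)
  obtain ⟨C, hC⟩ := exists_sum_range_le_add (f := fun k => ρ⁻¹ * (E k ω / (k + 1)))
    (g := fun k => E k ω / R (chainOf next x U k ω)) <| by
    filter_upwards [hR] with k ⟨hk₀, hk⟩
    rw [inv_mul_eq_div, div_div, mul_comm]
    exact div_le_div_of_nonneg_left (hE0 k) hk₀ hk
  refine (eventually_log_le_of_tendsto_div_log
    (tendsto_const_add_mul_div_log (tendsto_sum_div_succ_div_log hE) (-(c * C)) (c * ρ⁻¹))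
    (by rw [mul_one, ← div_eq_mul_inv, one_lt_div hρ]; exact hρc)).mono fun n hn => ?_
  have h := mul_le_mul_of_nonneg_left (hC n) (hρ.trans hρc).le
  rw [← mul_sum, mul_add] at h
  rw [jumpT_eq_sum]
  linarith

end JumpProcess

section Yule

variable {Ω : Type*} {μ : ℝ} {w : ℕ} {E : ℕ → Ω → ℝ} {ω : Ω}

lemma chainOf_add_one (w : ℕ) (U : ℕ → Ω → ℝ) (n : ℕ) (ω : Ω) :
    chainOf (fun s _ => s + 1) w U n ω = w + n := by
  induction n with
  | zero => rfl
  | succ n ih => exact congrArg (· + 1) ih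

lemma yule_eq_add_card (t : ℝ) :
    yule μ w E t ω = w + Nat.card {n : ℕ |
      jumpT (fun s : ℕ => μ * s) (fun s _ => s + 1) w E (fun _ _ => 0) (n + 1) ω ≤ t} := by
  rw [yule, jumpProc, chainOf_add_one]

lemma le_yule (t : ℝ) : w ≤ yule μ w E t ω := by
  rw [yule_eq_add_card]
  exact Nat.le_add_right _ _

lemma yule_le_mul_exp (hμ : 0 < μ) (hE0 : ∀ k, 0 ≤ E k ω)
    (hE : Tendsto (fun n : ℕ => (∑ k ∈ range n, E k ω) / n) atTop (𝓝 1)) {c : ℝ} (hc : μ < c) :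
    ∃ D : ℝ, ∀ t : ℝ, 0 ≤ t → (yule μ w E t ω : ℝ) ≤ D * Real.exp (c * t) := by
  obtain ⟨ρ, hμρ, hρc⟩ := exists_between hc
  have hR : ∀ᶠ k : ℕ in atTop, 0 < μ * ((chainOf (fun s _ => s + 1) w (fun _ _ => 0) k ω : ℕ) : ℝ)
      ∧ μ * ((chainOf (fun s _ => s + 1) w (fun _ _ => 0) k ω : ℕ) : ℝ) ≤ ρ * (k + 1) := by
    filter_upwards [eventually_ge_atTop 1, eventually_ge_atTop ⌈μ * w / (ρ - μ)⌉₊]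
      with k hk1 hkw
    have hk : μ * w / (ρ - μ) ≤ k := Nat.ceil_le.mp hkw
    rw [div_le_iff₀ (sub_pos.mpr hμρ)] at hk
    simp only [chainOf_add_one, Nat.cast_add]
    constructor
    · have : (1 : ℝ) ≤ k := by exact_mod_cast hk1
      positivity
    · nlinarith
  obtain ⟨N, hN⟩ := eventually_atTop.mp (eventually_log_le_mul_jumpT (R := fun s : ℕ => μ * s)
    (next := fun s _ => s + 1) (x := w) (U := fun _ _ => 0) hE0 hE hρc hR)
  have hc0 : 0 < c := hμ.trans hc
  refine ⟨w + N + 1, fun t ht => ?_⟩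
  have hcard := card_jumpT_succ_le hc0.le hN t
  have hexp : 1 ≤ Real.exp (c * t) := Real.one_le_exp (by positivity)
  calc (yule μ w E t ω : ℝ) ≤ w + (N + Real.exp (c * t)) := by
        rw [yule_eq_add_card]
        push_cast
        gcongr
        refine (Nat.cast_le.mpr hcard).trans ?_
        push_cast
        gcongr
        exact Nat.floor_le (by positivity)
    _ ≤ (w + N + 1) * Real.exp (c * t) := by nlinarith

end Yule

section BirthDeath

variable {Ω : Type*} {μ ν : ℝ} {z : ℕ} {E U : ℕ → Ω → ℝ} {ω : Ω}

instance (μ ν : ℝ) (z : ℕ) (U : ℕ → Ω → ℝ) (n : ℕ) (ω : Ω) : Decidable (bdUp μ ν z U n ω) :=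
  inferInstanceAs (Decidable (_ = _))

lemma bdR_pos (hμ : 0 < μ) (hν : 0 ≤ ν) (s : ℕ) : 0 < bdR μ ν s := by
  have : (1 : ℝ) ≤ (max s 1 : ℕ) := by exact_mod_cast le_max_right s 1
  unfold bdR
  positivity

lemma bdR_le_mul_max (hν : 0 ≤ ν) (s : ℕ) : bdR μ ν s ≤ (μ + ν) * (max s 1 : ℕ) := by
  have : (s : ℝ) ≤ (max s 1 : ℕ) := by exact_mod_cast le_max_left s 1
  unfold bdR
  nlinarith

lemma mul_le_bdR (hμ : 0 ≤ μ) (s : ℕ) : (μ + ν) * s ≤ bdR μ ν s := by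
  have : (s : ℝ) ≤ (max s 1 : ℕ) := by exact_mod_cast le_max_left s 1
  unfold bdR
  nlinarith

lemma bdChain_le (n : ℕ) : bdChain μ ν z U n ω ≤ z + n := by
  induction n with
  | zero => exact le_rfl
  | succ n ih =>
    change bdNext μ ν (bdChain μ ν z U n ω) (U n ω) ≤ z + (n + 1)
    unfold bdNext
    split_ifs <;> omega

lemma bdNext_eq_add_one (hμ : 0 < μ) (hν : 0 ≤ ν) {u : ℝ} (hu : u ≤ μ / (μ + ν)) (s : ℕ) :
    bdNext μ ν s u = s + 1 := by
  have hR := bdR_pos hμ hν s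
  rw [bdNext, if_pos]
  calc u * bdR μ ν s ≤ μ / (μ + ν) * bdR μ ν s := mul_le_mul_of_nonneg_right hu hR.le
    _ ≤ μ / (μ + ν) * ((μ + ν) * (max s 1 : ℕ)) := by gcongr; exact bdR_le_mul_max hν s
    _ = μ * (max s 1 : ℕ) := by field_simp

lemma bdUp_of_le (hμ : 0 < μ) (hν : 0 ≤ ν) {n : ℕ} (h : U n ω ≤ μ / (μ + ν)) :
    bdUp μ ν z U n ω :=
  bdNext_eq_add_one hμ hν h _

lemma count_le_count_bdUp (hμ : 0 < μ) (hν : 0 ≤ ν) (n : ℕ) :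
    Nat.count (fun k => U k ω ≤ μ / (μ + ν)) n ≤ Nat.count (fun k => bdUp μ ν z U k ω) n :=
  Nat.count_mono_left fun _ _ => bdUp_of_le hμ hν

lemma eventually_mul_le_count_bdUp (hμ : 0 < μ) (hν : 0 ≤ ν)
    (hU : Tendsto (fun n : ℕ => (Nat.count (fun k => U k ω ≤ μ / (μ + ν)) n : ℝ) / n) atTop
      (𝓝 (μ / (μ + ν))))
    {q : ℝ} (hq : q < μ / (μ + ν)) :
    ∀ᶠ n : ℕ in atTop, q * n ≤ Nat.count (fun k => bdUp μ ν z U k ω) n := by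
  filter_upwards [hU.eventually_const_lt hq, eventually_gt_atTop 0] with n hn hn0
  rw [lt_div_iff₀ (by positivity)] at hn
  exact hn.le.trans (by exact_mod_cast count_le_count_bdUp (z := z) (U := U) hμ hν n)

lemma infinite_setOf_bdUp (hμ : 0 < μ) (hν : 0 ≤ ν)
    (hU : Tendsto (fun n : ℕ => (Nat.count (fun k => U k ω ≤ μ / (μ + ν)) n : ℝ) / n) atTop
      (𝓝 (μ / (μ + ν)))) :
    {k | bdUp μ ν z U k ω}.Infinite := fun hfin => by
  have hp : 0 < μ / (μ + ν) := by positivity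
  obtain ⟨n, hn, hlarge⟩ := (eventually_mul_le_count_bdUp (z := z) hμ hν hU (half_lt_self hp)
    |>.and <| (tendsto_natCast_atTop_atTop.const_mul_atTop (half_pos hp)).eventually_gt_atTop
      (#hfin.toFinset : ℝ)).exists
  have : (Nat.count (fun k => bdUp μ ν z U k ω) n : ℝ) ≤ #hfin.toFinset := by
    exact_mod_cast Nat.count_le_card hfin n
  linarith

/-- The chain dominates the random walk with steps `+1` on `{U k ≤ μ / (μ + ν)}` and `-1`
elsewhere. -/
lemma two_mul_count_le_add_bdChain (hμ : 0 < μ) (hν : 0 ≤ ν) (n : ℕ) :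
    2 * Nat.count (fun k => U k ω ≤ μ / (μ + ν)) n ≤ n + bdChain μ ν z U n ω := by
  induction n with
  | zero => simp
  | succ n ih =>
    have hstep : bdChain μ ν z U (n + 1) ω = bdNext μ ν (bdChain μ ν z U n ω) (U n ω) := rfl
    rw [Nat.count_succ, hstep]
    split_ifs with h
    · rw [bdNext_eq_add_one hμ hν h]
      omega
    · have : bdChain μ ν z U n ω ≤ bdNext μ ν (bdChain μ ν z U n ω) (U n ω) + 1 := by
        unfold bdNext
        split_ifs <;> omega
      omega

lemma bdTimes_mono (hμ : 0 < μ) (hν : 0 ≤ ν) (hE0 : ∀ k, 0 ≤ E k ω) :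
    Monotone fun n => bdTimes μ ν z E U n ω :=
  jumpT_mono hE0 fun _ => bdR_pos hμ hν _

variable (hμ : 0 < μ) (hν : 0 ≤ ν) (hE0 : ∀ k, 0 ≤ E k ω)
  (hE : Tendsto (fun n : ℕ => (∑ k ∈ range n, E k ω) / n) atTop (𝓝 1))
include hμ hν hE0 hE

lemma tendsto_bdTimes_atTop : Tendsto (fun n => bdTimes μ ν z E U n ω) atTop atTop := by
  set ρ := (μ + ν) * (z + 1)
  have hR : ∀ᶠ k : ℕ in atTop, 0 < bdR μ ν (bdChain μ ν z U k ω) ∧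
      bdR μ ν (bdChain μ ν z U k ω) ≤ ρ * (k + 1) := by
    refine Eventually.of_forall fun k => ⟨bdR_pos hμ hν _, ?_⟩
    have : max (bdChain μ ν z U k ω) 1 ≤ (z + 1) * (k + 1) :=
      max_le ((bdChain_le k).trans (by nlinarith)) (by nlinarith)
    calc bdR μ ν (bdChain μ ν z U k ω) ≤ (μ + ν) * (max (bdChain μ ν z U k ω) 1 : ℕ) :=
          bdR_le_mul_max hν _
      _ ≤ ρ * (k + 1) := by rw [mul_assoc]; gcongr; exact_mod_cast this
  have hlog := eventually_log_le_mul_jumpT hE0 hE (lt_add_one ρ) hR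
  refine tendsto_atTop_mono' atTop ?_
    ((Real.tendsto_log_atTop.comp tendsto_natCast_atTop_atTop).atTop_div_const
      (by positivity : 0 < ρ + 1))
  filter_upwards [hlog] with n hn
  rw [div_le_iff₀' (by positivity)]
  exact hn

lemma eventually_mul_bdTimes_le_log
    (hU : Tendsto (fun n : ℕ => (Nat.count (fun k => U k ω ≤ μ / (μ + ν)) n : ℝ) / n) atTop
      (𝓝 (μ / (μ + ν))))
    {c : ℝ} (hc : 0 ≤ c) (hcμν : c < μ - ν) :
    ∀ᶠ n : ℕ in atTop, c * bdTimes μ ν z E U n ω ≤ Real.log n := by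
  obtain ⟨ρ, hcρ, hρ⟩ := exists_between hcμν
  set q := fun k : ℕ => (Nat.count (fun k => U k ω ≤ μ / (μ + ν)) k : ℝ)
  have hlim : Tendsto (fun k : ℕ => (μ + ν) * (2 * (q k / k) - 1) * (k / (k + 1))) atTop
      (𝓝 (μ - ν)) := by
    have := ((hU.const_mul 2).sub_const 1).const_mul (μ + ν) |>.mul
      (tendsto_natCast_div_add_atTop (1 : ℝ))
    convert this using 2
    field_simp
    ring
  have hR : ∀ᶠ k : ℕ in atTop, ρ * (k + 1) ≤ bdR μ ν (bdChain μ ν z U k ω) := by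
    filter_upwards [hlim.eventually_const_lt hρ, eventually_ge_atTop 1] with k hk hk1
    have hk0 : (0 : ℝ) < k := by exact_mod_cast hk1
    have hwalk : 2 * q k ≤ k + bdChain μ ν z U k ω := by
      simp only [q]
      exact_mod_cast two_mul_count_le_add_bdChain (z := z) (U := U) (ω := ω) hμ hν k
    have : ρ * (k + 1) < (μ + ν) * (2 * q k - k) := by
      rw [show (μ + ν) * (2 * (q k / k) - 1) * (k / (k + 1))
          = (μ + ν) * (2 * q k - k) / (k + 1) by field_simp] at hk
      rwa [lt_div_iff₀ (by positivity)] at hk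
    calc ρ * (k + 1) ≤ (μ + ν) * (2 * q k - k) := this.le
      _ ≤ (μ + ν) * bdChain μ ν z U k ω := by gcongr; linarith
      _ ≤ bdR μ ν (bdChain μ ν z U k ω) := mul_le_bdR hμ.le _
  exact eventually_mul_jumpT_le_log hE0 hE hc hcρ hR

end BirthDeath

section Killing

variable {Ω : Type*} {ω : Ω}

lemma killIdxR_eq_top {W : ℝ → Ω → ℕ} {σ : ℕ → Ω → ℝ} (h : ∀ n, W (σ n ω) ω ≠ 0) :
    killIdxR W σ ω = ⊤ := by
  rw [killIdxR, sInf_eq_top]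
  rintro _ ⟨n, -, hn⟩
  exact absurd hn (h n)

lemma natCast_le_tsum_ite {σ : ℕ → ℝ} {t : ℝ} {x : ℕ → ℤ} {G : ℕ}
    (hx : ∀ i, σ i ≤ t → 1 ≤ x i) (hG : ∀ i < G, σ i ≤ t) (hσ : Tendsto σ atTop atTop) :
    (G : ℤ) ≤ ∑' i, if σ i ≤ t then x i else 0 := by
  obtain ⟨M, hM⟩ := eventually_atTop.mp (hσ.eventually_gt_atTop t)
  have hGM : G ≤ M := by
    by_contra! h
    exact (hM M le_rfl).not_ge (hG M h)
  rw [tsum_eq_sum (s := range M) fun i hi =>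
    if_neg (hM i (by simpa using hi)).not_ge]
  calc (G : ℤ) = ∑ i ∈ range G, (1 : ℤ) := by simp
    _ ≤ ∑ i ∈ range G, if σ i ≤ t then x i else 0 :=
        sum_le_sum fun i hi => by
          rw [if_pos (hG i (mem_range.mp hi))]
          exact hx i (hG i (mem_range.mp hi))
    _ ≤ ∑ i ∈ range M, if σ i ≤ t then x i else 0 :=
        sum_le_sum_of_subset_of_nonneg (range_subset_range.mpr hGM) fun i _ _ => by
          split_ifs with h
          · exact zero_le_one.trans (hx i h)
          · exact le_rfl

variable {μ ν : ℝ} {z : ℕ} {E U : ℕ → Ω → ℝ}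

lemma tendsto_bdBirthTime_atTop (hT : Tendsto (fun n => bdTimes μ ν z E U n ω) atTop atTop)
    (hinf : {k | bdUp μ ν z U k ω}.Infinite) :
    Tendsto (fun i => bdBirthTime μ ν z E U i ω) atTop atTop :=
  hT.comp <| tendsto_add_atTop_nat 1 |>.comp (Nat.nth_strictMono hinf).tendsto_atTop

lemma bdBirthTime_le_bdTimes (hmono : Monotone fun n => bdTimes μ ν z E U n ω) {i n : ℕ}
    (hi : i < Nat.count (fun k => bdUp μ ν z U k ω) n) :
    bdBirthTime μ ν z E U i ω ≤ bdTimes μ ν z E U n ω :=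
  hmono (Nat.nth_lt_of_lt_count hi)

lemma count_bdUp_le_of_forall_ne_zero {W Y : ℝ → Ω → ℕ} {X : ℕ → ℝ → Ω → ℕ}
    (hmono : Monotone fun n => bdTimes μ ν z E U n ω)
    (hT : Tendsto (fun n => bdTimes μ ν z E U n ω) atTop atTop)
    (hinf : {k | bdUp μ ν z U k ω}.Infinite)
    (hX : ∀ i t, bdBirthTime μ ν z E U i ω ≤ t → 1 ≤ X i t ω)
    (hW : ∀ t : ℝ, 0 ≤ t → (W t ω : ℤ) = (Y t ω : ℤ) - ∑' i : ℕ,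
        if bdBirthTime μ ν z E U i ω ≤ t ∧
            (i : ℕ∞) ≤ killIdxR W (bdBirthTime μ ν z E U) ω
          then (X i t ω : ℤ) else 0)
    (hne : ∀ t : ℝ, 0 ≤ t → W t ω ≠ 0) (n : ℕ) :
    Nat.count (fun k => bdUp μ ν z U k ω) n ≤ Y (bdTimes μ ν z E U n ω) ω := by
  have hT0 : ∀ m, 0 ≤ bdTimes μ ν z E U m ω := fun m => hmono m.zero_le
  have hκ := killIdxR_eq_top (σ := bdBirthTime μ ν z E U) fun i => hne _ (hT0 _)
  have hsum := natCast_le_tsum_ite (t := bdTimes μ ν z E U n ω)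
    (x := fun i => (X i (bdTimes μ ν z E U n ω) ω : ℤ))
    (fun i hi => by exact_mod_cast hX i _ hi) (fun i hi => bdBirthTime_le_bdTimes hmono hi)
    (tendsto_bdBirthTime_atTop hT hinf)
  have hWn := hW _ (hT0 n)
  simp only [hκ, le_top, and_true] at hWn
  omega

end Killing

section Probability

variable {Ω : Type*} [MeasurableSpace Ω] {P : Measure Ω}

lemma exponentialPDF_toReal_mul {r : ℝ} (hr : 0 < r) (x : ℝ) :
    (exponentialPDF r x).toReal * x =
      (Set.Ioi 0).indicator (fun y => r * (y * exp (-(r * y)))) x := by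
  rcases lt_or_ge 0 x with hx | hx
  · rw [Set.indicator_of_mem (Set.mem_Ioi.mpr hx), exponentialPDF_of_nonneg hx.le,
      ENNReal.toReal_ofReal (by positivity)]
    ring
  · rw [Set.indicator_of_notMem (Set.notMem_Ioi.mpr hx)]
    rcases hx.lt_or_eq with hx | rfl
    · rw [exponentialPDF_of_neg hx, ENNReal.toReal_zero, zero_mul]
    · rw [mul_zero]

lemma measurable_exponentialPDF (r : ℝ) : Measurable (exponentialPDF r) :=
  (measurable_exponentialPDFReal r).ennreal_ofReal

lemma integrable_id_expMeasure {r : ℝ} (hr : 0 < r) : Integrable id (expMeasure r) := by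
  rw [expMeasure, integrable_withDensity_iff_integrable_smul' (measurable_exponentialPDF r)
    (ae_of_all _ fun _ => ENNReal.ofReal_lt_top)]
  simp only [smul_eq_mul, id, exponentialPDF_toReal_mul hr]
  refine (integrable_indicator_iff measurableSet_Ioi).mpr (Integrable.const_mul ?_ r)
  have h := integrableOn_rpow_mul_exp_neg_mul_rpow (s := 1) (p := 1) (by norm_num) one_pos hr
  simp only [Real.rpow_one, neg_mul] at h
  exact h

lemma integral_id_expMeasure {r : ℝ} (hr : 0 < r) : ∫ x, x ∂expMeasure r = r⁻¹ := by
  rw [expMeasure, integral_withDensity_eq_integral_toReal_smul (measurable_exponentialPDF r)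
    (ae_of_all _ fun _ => ENNReal.ofReal_lt_top)]
  simp only [smul_eq_mul, exponentialPDF_toReal_mul hr]
  rw [integral_indicator measurableSet_Ioi, integral_const_mul]
  have := integral_rpow_mul_exp_neg_mul_Ioi (a := 2) two_pos hr
  norm_num at this
  rw [this]
  field_simp

lemma integral_indicator_Iic_unifMeasure {p : ℝ} (hp0 : 0 ≤ p) (hp1 : p ≤ 1) :
    ∫ x, (Set.Iic p).indicator 1 x ∂unifMeasure = p := by
  rw [integral_indicator_one measurableSet_Iic, unifMeasure,
    measureReal_restrict_apply measurableSet_Iic, Set.Iic_inter_Ioc_of_le hp1,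
    Real.volume_real_Ioc_of_le hp0, sub_zero]

lemma ae_nonneg_of_map_eq_expMeasure {X : Ω → ℝ} (hX : Measurable X) {r : ℝ}
    (hlaw : P.map X = expMeasure r) : ∀ᵐ ω ∂P, 0 ≤ X ω := by
  refine ae_of_ae_map hX.aemeasurable ?_
  rw [hlaw, expMeasure, ae_withDensity_iff (measurable_exponentialPDF r)]
  exact ae_of_all _ fun x hx => not_lt.mp fun hneg => hx (exponentialPDF_of_neg hneg)

lemma ae_tendsto_sum_comp_div {X : ℕ → Ω → ℝ} {ν : Measure ℝ} {φ : ℝ → ℝ}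
    (hX : ∀ n, Measurable (X n)) (hind : Pairwise fun i j => IndepFun (X i) (X j) P)
    (hlaw : ∀ n, P.map (X n) = ν) (hφ : Measurable φ) (hint : Integrable φ ν) :
    ∀ᵐ ω ∂P, Tendsto (fun n : ℕ => (∑ k ∈ range n, φ (X k ω)) / n) atTop
      (𝓝 (∫ x, φ x ∂ν)) := by
  have hident (n : ℕ) : IdentDistrib (φ ∘ X n) (φ ∘ X 0) P P :=
    (IdentDistrib.mk (hX n).aemeasurable (hX 0).aemeasurable (by rw [hlaw, hlaw])).comp hφ
  rw [← hlaw 0] at hint ⊢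
  have hmean := integral_map (hX 0).aemeasurable (hint.aestronglyMeasurable)
  rw [hmean]
  exact strong_law_ae_real (fun n => φ ∘ X n) (hint.comp_measurable (hX 0))
    (fun i j hij => (hind hij).comp hφ hφ) hident

lemma ae_tendsto_sum_div_of_map_eq_expMeasure {E : ℕ → Ω → ℝ} (hE : ∀ n, Measurable (E n))
    (hind : Pairwise fun i j => IndepFun (E i) (E j) P) {r : ℝ} (hr : 0 < r)
    (hlaw : ∀ n, P.map (E n) = expMeasure r) :
    ∀ᵐ ω ∂P, Tendsto (fun n : ℕ => (∑ k ∈ range n, E k ω) / n) atTop (𝓝 r⁻¹) := by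
  simpa [integral_id_expMeasure hr] using
    ae_tendsto_sum_comp_div hE hind hlaw measurable_id (integrable_id_expMeasure hr)

lemma ae_tendsto_count_le_div {U : ℕ → Ω → ℝ} (hU : ∀ n, Measurable (U n))
    (hind : Pairwise fun i j => IndepFun (U i) (U j) P)
    (hlaw : ∀ n, P.map (U n) = unifMeasure) {p : ℝ} (hp0 : 0 ≤ p) (hp1 : p ≤ 1) :
    ∀ᵐ ω ∂P, Tendsto (fun n : ℕ => (Nat.count (fun k => U k ω ≤ p) n : ℝ) / n) atTop (𝓝 p) := by
  have : IsFiniteMeasure unifMeasure := by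
    rw [unifMeasure]
    exact isFiniteMeasure_restrict.mpr measure_Ioc_lt_top.ne
  have hint : Integrable ((Set.Iic p).indicator 1) unifMeasure :=
    (integrable_const (1 : ℝ)).indicator measurableSet_Iic
  have h := ae_tendsto_sum_comp_div hU hind hlaw (measurable_one.indicator measurableSet_Iic) hint
  rw [integral_indicator_Iic_unifMeasure hp0 hp1] at h
  filter_upwards [h] with ω hω
  convert hω using 3 with n
  simp [Nat.count_eq_card_filter_range, Set.indicator_apply, sum_boole]

end Probability

section Extinction

variable {Ω : Type*} {μW μZ ν : ℝ} {w z : ℕ} {W : ℝ → Ω → ℕ} {EY EZ UZ : ℕ → Ω → ℝ}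
  {X : ℕ → ℝ → Ω → ℕ} {ω : Ω}

theorem exists_killed_eq_zero_of_lln (hμW : 0 < μW) (hν : 0 ≤ ν) (hsub : μW < μZ - ν)
    (hEY0 : ∀ k, 0 ≤ EY k ω)
    (hEY : Tendsto (fun n : ℕ => (∑ k ∈ range n, EY k ω) / n) atTop (𝓝 1))
    (hEZ0 : ∀ k, 0 ≤ EZ k ω)
    (hEZ : Tendsto (fun n : ℕ => (∑ k ∈ range n, EZ k ω) / n) atTop (𝓝 1))
    (hUZ : Tendsto (fun n : ℕ => (Nat.count (fun k => UZ k ω ≤ μZ / (μZ + ν)) n : ℝ) / n)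
      atTop (𝓝 (μZ / (μZ + ν))))
    (hX : ∀ i t, bdBirthTime μZ ν z EZ UZ i ω ≤ t → 1 ≤ X i t ω)
    (hW : ∀ t : ℝ, 0 ≤ t → (W t ω : ℤ) = (yule μW w EY t ω : ℤ) - ∑' i : ℕ,
        if bdBirthTime μZ ν z EZ UZ i ω ≤ t ∧
            (i : ℕ∞) ≤ killIdxR W (bdBirthTime μZ ν z EZ UZ) ω
          then (X i t ω : ℤ) else 0) :
    ∃ t : ℝ, 0 ≤ t ∧ W t ω = 0 := by
  by_contra! hne
  have hμZ : 0 < μZ := by linarith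
  have hmono := bdTimes_mono (z := z) (E := EZ) (U := UZ) hμZ hν hEZ0
  have hcount := count_bdUp_le_of_forall_ne_zero hmono (tendsto_bdTimes_atTop hμZ hν hEZ0 hEZ)
    (infinite_setOf_bdUp hμZ hν hUZ) hX hW hne
  obtain ⟨c, hμWc, hc⟩ := exists_between hsub
  obtain ⟨c', hcc', hc'⟩ := exists_between hc
  have hc0 : 0 < c := hμW.trans hμWc
  obtain ⟨D, hD⟩ := yule_le_mul_exp (w := w) hμW hEY0 hEY hμWc
  have hp : 0 < μZ / (μZ + ν) := by positivity
  refine not_eventually_mul_le_mul_exp (D := D) (half_pos hp) hc0 hcc'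
    (eventually_mul_bdTimes_le_log (z := z) hμZ hν hEZ0 hEZ hUZ (hc0.trans hcc').le hc') ?_
  filter_upwards [eventually_mul_le_count_bdUp hμZ hν hUZ (half_lt_self hp)] with n hn
  exact hn.trans ((Nat.cast_le.mpr (hcount n)).trans (hD _ (hmono n.zero_le)))

end Extinction

theorem killed_yule_extinction_general {Ω : Type*} [MeasurableSpace Ω] (P : Measure Ω)
    (μW μZ ν : ℝ) (hμW : 0 < μW) (hν : 0 < ν)
    (hsub : μW < μZ - ν) (w z : ℕ)
    (W Z Y : ℝ → Ω → ℕ) (hrep : KilledYuleRep P μW μZ ν w z W Z Y) :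
    ∀ᵐ ω ∂P, ∃ t : ℝ, 0 ≤ t ∧ W t ω = 0 := by
  obtain ⟨EY, EZ, UZ, F, X, hmEY, hmEZ, hmUZ, -, hindep, hlawEY, hlawEZ, hlawUZ, -, rfl, -,
    hX, hW⟩ := hrep
  have hpair {g : ℕ → (ℕ ⊕ ℕ) ⊕ (ℕ ⊕ ℕ × ℕ)} (hg : g.Injective) :=
    fun i j (hij : i ≠ j) => (hindep.precomp hg).indepFun hij
  have hμZ : 0 < μZ := by linarith
  have hUZ := ae_tendsto_count_le_div hmUZ (hpair (Sum.inr_injective.comp Sum.inl_injective))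
    hlawUZ (p := μZ / (μZ + ν)) (by positivity) (div_le_one_of_le₀ (by linarith) (by positivity))
  have hEY := ae_tendsto_sum_div_of_map_eq_expMeasure hmEY
    (hpair (Sum.inl_injective.comp Sum.inl_injective)) one_pos hlawEY
  have hEZ := ae_tendsto_sum_div_of_map_eq_expMeasure hmEZ
    (hpair (Sum.inl_injective.comp Sum.inr_injective)) one_pos hlawEZ
  have hEY0 := ae_all_iff.mpr fun n => ae_nonneg_of_map_eq_expMeasure (hmEY n) (hlawEY n)
  have hEZ0 := ae_all_iff.mpr fun n => ae_nonneg_of_map_eq_expMeasure (hmEZ n) (hlawEZ n)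
  filter_upwards [hEY, hEZ, hUZ, hEY0, hEZ0] with ω hEYω hEZω hUZω hEY0ω hEZ0ω
  rw [inv_one] at hEYω hEZω
  refine exists_killed_eq_zero_of_lln hμW hν.le hsub hEY0ω hEYω hEZ0ω hEZω hUZω (fun i t hi => ?_)
    (hW · · ω)
  have := hX i (t - bdBirthTime μZ ν z EZ UZ i ω) (sub_nonneg.mpr hi) ω
  rw [add_sub_cancel] at this
  exact this ▸ le_yule _

/-- Proposition 6 (first part): in the interacting system with `μ_Z − ν > μ_W > 0`, the
extinction time `H₀ = inf{t ≥ 0 : W(t) = 0}` of the killed Yule process is almost surely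
finite, i.e. almost surely `W` hits `0`. -/
theorem killed_yule_extinction {Ω : Type*} [MeasurableSpace Ω] (P : Measure Ω)
    [IsProbabilityMeasure P] (μW μZ ν : ℝ) (hμW : 0 < μW) (hν : 0 < ν)
    (hsub : μW < μZ - ν) (w z : ℕ) (hw : 1 ≤ w)
    (W Z Y : ℝ → Ω → ℕ) (hrep : KilledYuleRep P μW μZ ν w z W Z Y) :
    ∀ᵐ ω ∂P, ∃ t : ℝ, 0 ≤ t ∧ W t ω = 0 :=
  killed_yule_extinction_general P μW μZ ν hμW hν hsub w z W Z Y hrep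

end FileSharing
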